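/- Let ABC be a triangle. The intouch triangle (vertices at the contact points of the incircle with the three sides) and the extouch triangle (vertices at the contact points of the three excircles with the corresponding sides) have equal area. -/
import Mathlib

set_option maxHeartbeats 1000000


/-- Unsigned area of the triangle `PQR` in the plane. -/
noncomputable def triArea (P Q R : EuclideanSpace ℝ (Fin 2)) : ℝ :=
  |(Q 0 - P 0) * (R 1 - P 1) - (Q 1 - P 1) * (R 0 - P 0)| / 2

/-- the intouch triangle and the extouch triangle of a triangle
have equal area. -/
theorem stmt7 (A B C : EuclideanSpace ℝ (Fin 2))
    (hABC : AffineIndependent ℝ ![A, B, C])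
    (a b c p : ℝ)
    (ha : a = dist B C) (hb : b = dist C A) (hc : c = dist A B)
    (hp : p = (a + b + c) / 2)
    (X Y Z X' Y' Z' : EuclideanSpace ℝ (Fin 2))
    (hX : X = B + ((p - b) / a) • (C - B))
    (hY : Y = C + ((p - c) / b) • (A - C))
    (hZ : Z = A + ((p - a) / c) • (B - A))
    (hX' : X' = B + ((p - c) / a) • (C - B))
    (hY' : Y' = C + ((p - a) / b) • (A - C))
    (hZ' : Z' = A + ((p - b) / c) • (B - A)) :
    triArea X Y Z = triArea X' Y' Z' := by
  have hinj := hABC.injective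
  have hBC : B ≠ C := by
    intro h
    have : (1 : Fin 3) = 2 := hinj (by simpa [Matrix.cons_val_one, Matrix.head_cons] using h)
    simp at this
  have hCA : C ≠ A := by
    intro h
    have : (2 : Fin 3) = 0 := hinj (by simpa using h)
    simp at this
  have hAB : A ≠ B := by
    intro h
    have : (0 : Fin 3) = 1 := hinj (by simpa using h)
    simp at this
  have ha0 : a ≠ 0 := by rw [ha]; exact dist_ne_zero.mpr hBC
  have hb0 : b ≠ 0 := by rw [hb]; exact dist_ne_zero.mpr hCA
  have hc0 : c ≠ 0 := by rw [hc]; exact dist_ne_zero.mpr hAB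
  have hta : (p - c) / a = 1 - (p - b) / a := by field_simp; linarith
  have htb : (p - a) / b = 1 - (p - c) / b := by field_simp; linarith
  have htc : (p - b) / c = 1 - (p - a) / c := by field_simp; linarith
  set t := (p - b) / a with hT
  set s := (p - c) / b with hS
  set r := (p - a) / c with hR
  rw [hta] at hX'
  rw [htb] at hY'
  rw [htc] at hZ'
  subst hX hY hZ hX' hY' hZ'
  simp only [triArea, PiLp.add_apply, PiLp.smul_apply, PiLp.sub_apply, smul_eq_mul]
  congr 1
  ring
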